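/- arXiv:2106.12246 — 4 statements merged into one kernel-verified Lean document; each statement's English description precedes it below -/
import Mathlib

section
/- Let (g, •) be a left-symmetric algebra. Define on Φ(g) = g × g the product (a,b) ⋆ (c,d) = (a•c, a•d). Then ⋆ is again a left-symmetric product on Φ(g). -/
/-- If (g, •) is left-symmetric, then (a,b) ⋆ (c,d) = (a•c, a•d) is a
left-symmetric product on Φ(g) = g × g. -/
theorem stmt1 {g : Type*} [AddCommGroup g] (mul : g → g → g)
    (hls : ∀ a b c, mul (mul a b) c - mul a (mul b c)
                  = mul (mul b a) c - mul b (mul a c)) :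
    let star : g × g → g × g → g × g := fun u v => (mul u.1 v.1, mul u.1 v.2)
    ∀ u v w : g × g,
      star (star u v) w - star u (star v w)
        = star (star v u) w - star v (star u w) := by
  intro star u v w
  exact Prod.ext (hls u.1 v.1 w.1) (hls u.1 v.1 w.2)
end

section
/- Let (g, •) be a left-symmetric algebra and equip Φ(g) = g × g with the Lie bracket [(a,b),(c,d)]_Φ = ([a,c], a•d − c•b), where [a,c] = a•c − c•a. Define the linear map J : Φ(g) → Φ(g) by J(a,b) = (−b, a). Then J² = −Id and the Nijenhuis torsion of J vanishes: for all u, v ∈ Φ(g), [Ju, Jv]_Φ − J[u, Jv]_Φ − J[Ju, v]_Φ − [u, v]_Φ = 0. -/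
/-- On Φ(g) = g × g with the bracket [(a,b),(c,d)]_Φ = (a•c − c•a, a•d − c•b)
associated to a left-symmetric algebra (g,•), the endomorphism J(a,b) = (−b,a)
satisfies J² = −Id and has vanishing Nijenhuis torsion. -/
theorem stmt3 {g : Type*} [AddCommGroup g] (mul : g → g → g)
    (hadd1 : ∀ a b c, mul (a + b) c = mul a c + mul b c)
    (hadd2 : ∀ a b c, mul a (b + c) = mul a b + mul a c)
    (hls : ∀ a b c, mul (mul a b) c - mul a (mul b c)
                  = mul (mul b a) c - mul b (mul a c)) :
    let bPhi : g × g → g × g → g × g := fun u v =>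
      (mul u.1 v.1 - mul v.1 u.1, mul u.1 v.2 - mul v.1 u.2)
    let J : g × g → g × g := fun u => (-u.2, u.1)
    (∀ u, J (J u) = -u) ∧
    (∀ u v, bPhi (J u) (J v) - J (bPhi u (J v)) - J (bPhi (J u) v) - bPhi u v = 0) := by
  intro bPhi J
  have hz1 : ∀ b, mul 0 b = 0 := fun b => by
    have h := hadd1 0 0 b; simp at h; exact h
  have hz2 : ∀ a, mul a 0 = 0 := fun a => by
    have h := hadd2 a 0 0; simp at h; exact h
  have hneg1 : ∀ a b, mul (-a) b = -mul a b := by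
    intro a b
    have h := hadd1 a (-a) b
    simp [hz1] at h
    exact eq_neg_of_add_eq_zero_right h.symm
  have hneg2 : ∀ a b, mul a (-b) = -mul a b := by
    intro a b
    have h := hadd2 a b (-b)
    simp [hz2] at h
    exact eq_neg_of_add_eq_zero_right h.symm
  constructor
  · intro u; simp [J, Prod.ext_iff]
  · intro u v
    simp only [bPhi, J, Prod.ext_iff, hneg1, hneg2, Prod.fst_sub, Prod.snd_sub,
      Prod.fst_zero, Prod.snd_zero, Prod.mk.injEq]
    constructor <;> abel
end

section
/- Let V be a 2-dimensional real inner product space with orthonormal basis (E₁, E₂), and let γ : V × V → V be a symmetric bilinear map. Suppose tr(γ_u) = 0 for all u ∈ V (where γ_u v = γ(u,v)), and ⟨γ(E₁,E₁),w⟩ + ⟨γ(E₂,E₂),w⟩ = 0 for all w ∈ V. Then each endomorphism γ_u is self-adjoint with respect to the inner product, and moreover tr(γ_u ∘ γ_u) ≥ 0 for all u. -/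
open scoped RealInnerProductSpace

lemma trace_onb {V : Type*} [NormedAddCommGroup V] [InnerProductSpace ℝ V]
    [FiniteDimensional ℝ V] (E : OrthonormalBasis (Fin 2) ℝ V) (f : V →ₗ[ℝ] V) :
    LinearMap.trace ℝ V f = ⟪E 0, f (E 0)⟫ + ⟪E 1, f (E 1)⟫ := by
  rw [LinearMap.trace_eq_matrix_trace ℝ E.toBasis f, Matrix.trace, Fin.sum_univ_two]
  simp [Matrix.diag, LinearMap.toMatrix_apply, E.coe_toBasis_repr_apply,
    E.repr_apply_apply, E.coe_toBasis]

/-- In a 2-dimensional real inner product space with orthonormal basis (E₀,E₁),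
a symmetric bilinear map γ with tr(γ_u) = 0 for all u and
⟨γ(E₀,E₀),w⟩ + ⟨γ(E₁,E₁),w⟩ = 0 for all w has each γ_u self-adjoint,
and tr(γ_u ∘ γ_u) ≥ 0 for all u. -/
theorem stmt8 {V : Type*} [NormedAddCommGroup V] [InnerProductSpace ℝ V]
    [FiniteDimensional ℝ V] (hdim : Module.finrank ℝ V = 2)
    (E : OrthonormalBasis (Fin 2) ℝ V)
    (γ : V →ₗ[ℝ] V →ₗ[ℝ] V)
    (hsym : ∀ u v, γ u v = γ v u)
    (htr : ∀ u, LinearMap.trace ℝ V (γ u) = 0)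
    (htr' : ∀ w : V, (inner ℝ (γ (E 0) (E 0)) w : ℝ) + (inner ℝ (γ (E 1) (E 1)) w : ℝ) = 0) :
    (∀ u v w : V, (inner ℝ (γ u v) w : ℝ) = (inner ℝ v (γ u w) : ℝ)) ∧
    (∀ u : V, 0 ≤ LinearMap.trace ℝ V (γ u ∘ₗ γ u)) := by
  have hEE : ∀ i j : Fin 2, ⟪E i, E j⟫ = if i = j then 1 else 0 :=
    orthonormal_iff_ite.mp E.orthonormal
  -- γ(E1,E1) = - γ(E0,E0)
  have h11 : γ (E 1) (E 1) = - γ (E 0) (E 0) := by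
    have h := htr' (γ (E 0) (E 0) + γ (E 1) (E 1))
    rw [← inner_add_left] at h
    have : γ (E 0) (E 0) + γ (E 1) (E 1) = 0 := by
      rwa [inner_self_eq_zero] at h
    linear_combination (norm := abel) this
  set a : ℝ := ⟪E 1, γ (E 0) (E 1)⟫ with ha
  set b : ℝ := ⟪E 1, γ (E 0) (E 0)⟫ with hb
  -- from trace of γ (E 0): ⟪E0, γ E0 E0⟫ = -a
  have t0 := htr (E 0)
  rw [trace_onb E] at t0
  have c00 : ⟪E 0, γ (E 0) (E 0)⟫ = -a := by linarith
  -- from trace of γ (E 1): ⟪E0, γ E1 E0⟫ + ⟪E1, γ E1 E1⟫ = 0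
  have t1 := htr (E 1)
  rw [trace_onb E] at t1
  have c01 : ⟪E 0, γ (E 0) (E 1)⟫ = b := by
    rw [hsym (E 0) (E 1)] at *
    rw [h11, inner_neg_right] at t1
    linarith
  have g00 : γ (E 0) (E 0) = (-a) • E 0 + b • E 1 := by
    conv_lhs => rw [← E.sum_repr' (γ (E 0) (E 0))]
    rw [Fin.sum_univ_two, c00, ← hb]
  have g01 : γ (E 0) (E 1) = b • E 0 + a • E 1 := by
    conv_lhs => rw [← E.sum_repr' (γ (E 0) (E 1))]
    rw [Fin.sum_univ_two, c01, ← ha]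
  have g10 : γ (E 1) (E 0) = b • E 0 + a • E 1 := by rw [← hsym, g01]
  have g11 : γ (E 1) (E 1) = a • E 0 + (-b) • E 1 := by
    rw [h11, g00]; module
  have expand : ∀ v : V, v = ⟪E 0, v⟫ • E 0 + ⟪E 1, v⟫ • E 1 := by
    intro v
    conv_lhs => rw [← E.sum_repr' v]
    rw [Fin.sum_univ_two]
  constructor
  · intro u v w
    rw [expand u, expand v, expand w]
    simp only [map_add, map_smul, LinearMap.add_apply, LinearMap.smul_apply,
      inner_add_left, inner_add_right, inner_smul_left, inner_smul_right,
      g00, g01, g10, g11, smul_smul, RCLike.inner_apply, conj_trivial]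
    simp only [inner_add_left, inner_add_right, inner_smul_left, inner_smul_right,
      hEE, conj_trivial]
    norm_num; ring
  · intro u
    rw [expand u]
    rw [trace_onb E]
    simp only [LinearMap.comp_apply, map_add, map_smul, LinearMap.add_apply,
      LinearMap.smul_apply, g00, g01, g10, g11, smul_add, smul_smul,
      inner_add_right, inner_smul_right, hEE]
    norm_num
    nlinarith [sq_nonneg (⟪E 0, u⟫ * a - ⟪E 1, u⟫ * b), sq_nonneg (⟪E 0, u⟫ * b + ⟪E 1, u⟫ * a)]
end

section
/- Let (A, •) be a finite-dimensional real commutative algebra, and define a connection on the affine space A by ∇_X Y = D⁰_X Y + γ(X, Y), where D⁰ is the canonical flat connection of the vector space A and γ is the constant tensor γ_u v = u • v. Then ∇ is torsionless, and ∇ is flat if and only if the product • is associative. -/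
open ContinuousLinearMap in
lemma aux_flat {A : Type*} [NormedAddCommGroup A] [NormedSpace ℝ A]
    [FiniteDimensional ℝ A]
    (B : A →L[ℝ] A →L[ℝ] A)
    (hswap : ∀ u v w, B u (B v w) = B v (B u w))
    (X Y Z : A → A) (hX : ContDiff ℝ (⊤ : ℕ∞) X) (hY : ContDiff ℝ (⊤ : ℕ∞) Y)
    (hZ : ContDiff ℝ (⊤ : ℕ∞) Z) (p : A) :
    (fderiv ℝ (fun q => fderiv ℝ Z q (Y q) + B (Y q) (Z q)) p (X p)
      + B (X p) (fderiv ℝ Z p (Y p) + B (Y p) (Z p)))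
    - (fderiv ℝ (fun q => fderiv ℝ Z q (X q) + B (X q) (Z q)) p (Y p)
      + B (Y p) (fderiv ℝ Z p (X p) + B (X p) (Z p)))
    - (fderiv ℝ Z p (fderiv ℝ Y p (X p) - fderiv ℝ X p (Y p))
      + B (fderiv ℝ Y p (X p) - fderiv ℝ X p (Y p)) (Z p)) = 0 := by
  have hXd : DifferentiableAt ℝ X p := hX.differentiable (by simp) p
  have hYd : DifferentiableAt ℝ Y p := hY.differentiable (by simp) p
  have hZd : DifferentiableAt ℝ Z p := hZ.differentiable (by simp) p
  have hZ'd : HasFDerivAt (fderiv ℝ Z) (fderiv ℝ (fderiv ℝ Z) p) p :=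
    (((hZ.fderiv_right (m := (⊤ : ℕ∞)) (by simp)).differentiable (by simp)) p).hasFDerivAt
  have hsym : ∀ v w, fderiv ℝ (fderiv ℝ Z) p v w = fderiv ℝ (fderiv ℝ Z) p w v :=
    hZ.contDiffAt.isSymmSndFDerivAt (by rw [minSmoothness_of_isRCLikeNormedField]; exact WithTop.coe_le_coe.mpr (le_top : (2 : ℕ∞) ≤ ⊤))
  have key : ∀ (U V : A → A), DifferentiableAt ℝ U p → DifferentiableAt ℝ V p →
      HasFDerivAt (fun q => fderiv ℝ Z q (U q) + B (V q) (Z q))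
        (((fderiv ℝ Z p).comp (fderiv ℝ U p) + (fderiv ℝ (fderiv ℝ Z) p).flip (U p))
          + ((B (V p)).comp (fderiv ℝ Z p) + (B.comp (fderiv ℝ V p)).flip (Z p))) p := by
    intro U V hU hV
    exact (hZ'd.clm_apply hU.hasFDerivAt).add
      ((HasFDerivAt.comp p (B.hasFDerivAt (x := V p)) hV.hasFDerivAt).clm_apply hZd.hasFDerivAt)
  rw [(key Y Y hYd hYd).fderiv, (key X X hXd hXd).fderiv]
  simp only [ContinuousLinearMap.add_apply, ContinuousLinearMap.coe_comp',
    Function.comp_apply, ContinuousLinearMap.flip_apply, ContinuousLinearMap.comp_apply,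
    map_add, map_sub, ContinuousLinearMap.coe_sub', Pi.sub_apply]
  rw [hsym (X p) (Y p), hswap (X p) (Y p) (Z p)]
  abel

/-- Let (A,•) be a finite-dimensional real commutative algebra. Define the
connection ∇_X Y = D⁰_X Y + X•Y on vector fields of the affine space A, where
D⁰ is the canonical flat connection (D⁰_X Y)(p) = dY_p(X(p)). Then ∇ is
torsionless, and ∇ is flat (for smooth vector fields) iff • is associative. -/
theorem stmt16 {A : Type*} [NormedAddCommGroup A] [NormedSpace ℝ A]
    [FiniteDimensional ℝ A]
    (mul : A → A → A)
    (hadd1 : ∀ x y z, mul (x + y) z = mul x z + mul y z)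
    (hadd2 : ∀ x y z, mul x (y + z) = mul x y + mul x z)
    (hsmul1 : ∀ (t : ℝ) x y, mul (t • x) y = t • mul x y)
    (hsmul2 : ∀ (t : ℝ) x y, mul x (t • y) = t • mul x y)
    (hcomm : ∀ x y, mul x y = mul y x) :
    let pd : (A → A) → (A → A) → (A → A) := fun X Y p => fderiv ℝ Y p (X p)
    let nabla : (A → A) → (A → A) → (A → A) := fun X Y p => pd X Y p + mul (X p) (Y p)
    let br : (A → A) → (A → A) → (A → A) := fun X Y p => pd X Y p - pd Y X p
    -- ∇ is torsionless
    (∀ (X Y : A → A) (p : A), nabla X Y p - nabla Y X p - br X Y p = 0) ∧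
    -- ∇ is flat iff • is associative
    ((∀ X Y Z : A → A, ContDiff ℝ (⊤ : ℕ∞) X → ContDiff ℝ (⊤ : ℕ∞) Y → ContDiff ℝ (⊤ : ℕ∞) Z → ∀ p : A,
        nabla X (nabla Y Z) p - nabla Y (nabla X Z) p - nabla (br X Y) Z p = 0)
      ↔ (∀ u v w : A, mul (mul u v) w = mul u (mul v w))) := by
  intro pd nabla br
  have hzero1 : ∀ y, mul 0 y = 0 := by
    intro y
    have := hsmul1 0 0 y
    simpa using this
  -- the continuous bilinear map
  let L : A →ₗ[ℝ] A →ₗ[ℝ] A := LinearMap.mk₂ ℝ mul hadd1 hsmul1 hadd2 hsmul2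
  let L2 : A →ₗ[ℝ] A →L[ℝ] A :=
    { toFun := fun u => LinearMap.toContinuousLinearMap (L u)
      map_add' := by intro u v; ext w; simp [L]
      map_smul' := by intro t u; ext w; simp [L] }
  let B : A →L[ℝ] A →L[ℝ] A := LinearMap.toContinuousLinearMap L2
  have hB : ∀ u v, B u v = mul u v := fun u v => rfl
  constructor
  · intro X Y p
    simp only [nabla, br, pd]
    rw [hcomm (Y p) (X p)]
    abel
  · constructor
    · intro h u v w
      have hswap : ∀ u v w : A, mul u (mul v w) = mul v (mul u w) := by
        intro u v w
        have := h (fun _ => u) (fun _ => v) (fun _ => w) contDiff_const contDiff_const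
          contDiff_const 0
        simp only [nabla, br, pd, fderiv_fun_const, Pi.zero_apply,
          ContinuousLinearMap.zero_apply, zero_add, sub_zero, sub_self, hzero1] at this
        exact sub_eq_zero.mp this
      rw [hcomm (mul u v) w, hswap w u v, hcomm w v]
    · intro hassoc X Y Z hX hY hZ p
      have hswap : ∀ u v w : A, B u (B v w) = B v (B u w) := by
        intro u v w
        simp only [hB]
        rw [← hassoc, hcomm u v, hassoc]
      have := aux_flat B hswap X Y Z hX hY hZ p
      simp only [nabla, br, pd, hB] at this ⊢
      convert this using 4
end
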